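/- arXiv:2012.00473 — 2 statements merged into one kernel-verified Lean document; each statement's English description precedes it below -/
import Mathlib

section
/- Let C be a finite type with a free additive action of ℤ/3ℤ, let Q be the quotient of C by the orbit equivalence relation with quotient map π, and for c, c' in the same orbit let sh(c,c') be the unique k ∈ ℤ/3ℤ with k +ᵥ c = c'. Let f : C ≃ C be an equivariant permutation with induced permutation f̄ of Q, and define sh(f) = ∑_{v ∈ Q} sh(f(φ(v)), φ(f̄(v))) for a (any) section φ : Q → C of π. If there exists a section φ₀ of π such that f(φ₀(v)) = φ₀(f̄(v)) for every v ∈ Q, then sh(f) = 0. -/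
open scoped Classical

/-- The shift `sh c c'`: the (under a free action, unique) element `k : ZMod 3`
with `k +ᵥ c = c'`, when `c` and `c'` lie in the same orbit; junk value `0`
otherwise. -/
noncomputable def sh {C : Type*} [AddAction (ZMod 3) C] (c c' : C) : ZMod 3 :=
  if h : ∃ k : ZMod 3, k +ᵥ c = c' then h.choose else 0

/-!
Proof idea: write the arbitrary section as `φ q = k q +ᵥ φ₀ q`. Equivariance of `f` and
compatibility of `φ₀` give `f (φ q) = k q +ᵥ φ₀ (f̄ q)`, so the summand at `q` is
`k (f̄ q) - k q`, and these differences telescope to `0` because `f̄` permutes `Q`.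
-/

section Shift

variable {C : Type*} [AddAction (ZMod 3) C]

theorem sh_vadd_self (hfree : ∀ (k : ZMod 3) (c : C), k +ᵥ c = c → k = 0)
    (c : C) (k : ZMod 3) : sh c (k +ᵥ c) = k := by
  have h : ∃ j : ZMod 3, j +ᵥ c = k +ᵥ c := ⟨k, rfl⟩
  rw [sh, dif_pos h]
  refine sub_eq_zero.mp (hfree _ c ?_)
  rw [sub_eq_neg_add, add_vadd, h.choose_spec, neg_vadd_vadd]

theorem sh_vadd_vadd (hfree : ∀ (k : ZMod 3) (c : C), k +ᵥ c = c → k = 0)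
    (c : C) (a b : ZMod 3) : sh (a +ᵥ c) (b +ᵥ c) = b - a := by
  rw [← sh_vadd_self hfree (a +ᵥ c) (b - a), vadd_vadd, sub_add_cancel]

theorem exists_vadd_eq_of_mk_eq {c c' : C}
    (h : Quotient.mk (AddAction.orbitRel (ZMod 3) C) c
      = Quotient.mk (AddAction.orbitRel (ZMod 3) C) c') :
    ∃ k : ZMod 3, k +ᵥ c' = c :=
  AddAction.mem_orbit_iff.mp (AddAction.orbitRel_apply.mp (Quotient.exact h))

end Shift

theorem finsum_sub_comp_perm {α G : Type*} [Finite α] [AddCommGroup G]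
    (σ : Equiv.Perm α) (g : α → G) : ∑ᶠ q, (g (σ q) - g q) = 0 := by
  rw [finsum_sub_distrib (Set.toFinite _) (Set.toFinite _), finsum_comp_equiv σ, sub_self]

theorem sum_sh_eq_zero_of_compatible_section_general
    {C : Type*} [Finite C] [AddAction (ZMod 3) C]
    (hfree : ∀ (k : ZMod 3) (c : C), k +ᵥ c = c → k = 0)
    (f : Equiv.Perm C)
    (hf : ∀ (k : ZMod 3) (c : C), f (k +ᵥ c) = k +ᵥ f c)
    (fbar : Equiv.Perm (Quotient (AddAction.orbitRel (ZMod 3) C)))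
    (φ₀ : Quotient (AddAction.orbitRel (ZMod 3) C) → C)
    (hφ₀ : ∀ q, Quotient.mk (AddAction.orbitRel (ZMod 3) C) (φ₀ q) = q)
    (hcomm : ∀ q, f (φ₀ q) = φ₀ (fbar q))
    (φ : Quotient (AddAction.orbitRel (ZMod 3) C) → C)
    (hφ : ∀ q, Quotient.mk (AddAction.orbitRel (ZMod 3) C) (φ q) = q) :
    ∑ᶠ q, sh (f (φ q)) (φ (fbar q)) = 0 := by
  choose k hk using fun q ↦ exists_vadd_eq_of_mk_eq ((hφ q).trans (hφ₀ q).symm)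
  have summand : ∀ q, sh (f (φ q)) (φ (fbar q)) = k (fbar q) - k q := fun q ↦ by
    rw [← hk q, ← hk (fbar q), hf, hcomm, sh_vadd_vadd hfree]
  simp only [summand]
  exact finsum_sub_comp_perm fbar k

/-- Key step of Theorem 4.3(v): if an equivariant permutation `f` admits a section
`φ₀` of the quotient map compatible with `f` (i.e. `f (φ₀ v) = φ₀ (f̄ v)` for all
`v`), then its total shift vanishes: `sh f = 0` (computed with any section `φ`). -/
theorem sum_sh_eq_zero_of_compatible_section
    {C : Type*} [Finite C] [AddAction (ZMod 3) C]
    (hfree : ∀ (k : ZMod 3) (c : C), k +ᵥ c = c → k = 0)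
    (f : Equiv.Perm C)
    (hf : ∀ (k : ZMod 3) (c : C), f (k +ᵥ c) = k +ᵥ f c)
    (fbar : Equiv.Perm (Quotient (AddAction.orbitRel (ZMod 3) C)))
    (hfbar : ∀ c : C,
      Quotient.mk (AddAction.orbitRel (ZMod 3) C) (f c)
        = fbar (Quotient.mk (AddAction.orbitRel (ZMod 3) C) c))
    (φ₀ : Quotient (AddAction.orbitRel (ZMod 3) C) → C)
    (hφ₀ : ∀ q, Quotient.mk (AddAction.orbitRel (ZMod 3) C) (φ₀ q) = q)
    (hcomm : ∀ q, f (φ₀ q) = φ₀ (fbar q))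
    (φ : Quotient (AddAction.orbitRel (ZMod 3) C) → C)
    (hφ : ∀ q, Quotient.mk (AddAction.orbitRel (ZMod 3) C) (φ q) = q) :
    ∑ᶠ q, sh (f (φ q)) (φ (fbar q)) = 0 :=
  sum_sh_eq_zero_of_compatible_section_general hfree f hf fbar φ₀ hφ₀ hcomm φ hφ
end

section
/- Let C be a finite type with a free additive action of ℤ/3ℤ, let Q be the quotient of C by the orbit equivalence relation with quotient map π, and for c, c' in the same orbit let sh(c,c') be the unique k ∈ ℤ/3ℤ with k +ᵥ c = c'. For an equivariant permutation f : C ≃ C with induced permutation f̄ of Q, define sh(f) = ∑_{v ∈ Q} sh(f(φ(v)), φ(f̄(v))) for a (any) section φ of π. Let S be a set of equivariant permutations of C such that every f ∈ S admits a section φ₀ of π with f(φ₀(v)) = φ₀(f̄(v)) for all v ∈ Q. Then every element g of the subgroup of Equiv.Perm C generated by S satisfies sh(g) = 0. -/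
open scoped Classical

/-!
For an equivariant `g` with induced permutation `ḡ` of the orbits and a section `φ`, the total
shift `∑ sh (g (φ q)) (φ (ḡ q))` does not depend on `φ`: replacing `φ` by `ψ` changes the term at
`q` by `d q - d (ḡ q)` with `d q = sh (φ q) (ψ q)`, and these differences sum to zero because `ḡ`
is a permutation. With the section fixed, the total shift is additive under composition (reindex
one of the sums by `ȳ`), so it vanishes on the subgroup generated by permutations for which some
section makes every term of the form `sh c c = 0`.
-/

open Function

theorem Equiv.Perm.eq_of_semiconj_mk {α : Type*} {s : Setoid α} {g : α → α}
    {a b : Equiv.Perm (Quotient s)} (ha : Semiconj (Quotient.mk s) g a)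
    (hb : Semiconj (Quotient.mk s) g b) : a = b :=
  Equiv.ext fun q => Quotient.inductionOn q fun c => (ha c).symm.trans (hb c)

section Equivariant

variable (G C : Type*) [AddGroup G] [AddAction G C]

def equivariantPerms : Subgroup (Equiv.Perm C) where
  carrier := {g | ∀ (k : G) (c : C), g (k +ᵥ c) = k +ᵥ g c}
  mul_mem' {x y} hx hy k c := by
    rw [Equiv.Perm.mul_apply, Equiv.Perm.mul_apply, hy k c, hx k (y c)]
  one_mem' _ _ := rfl
  inv_mem' {g} hg k c :=
    g.injective (by simp only [hg k, Equiv.Perm.coe_inv, Equiv.apply_symm_apply])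

variable {G C}

theorem exists_semiconj_of_mem_equivariantPerms {g : Equiv.Perm C}
    (hg : g ∈ equivariantPerms G C) :
    ∃ gbar : Equiv.Perm (AddAction.orbitRel.Quotient G C), Semiconj (Quotient.mk _) g gbar := by
  have hg' : ∀ (k : G) (c : C), g (k +ᵥ c) = k +ᵥ g c := hg
  refine ⟨Quotient.congr g fun a b => ?_, fun _ => rfl⟩
  simp only [AddAction.orbitRel_apply, AddAction.mem_orbit_iff, ← hg', g.apply_eq_iff_eq]

theorem exists_vadd_eq_of_mk_eq_s7 {a b : C}
    (h : (⟦a⟧ : AddAction.orbitRel.Quotient G C) = ⟦b⟧) : ∃ k : G, k +ᵥ a = b :=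
  Quotient.exact h.symm

end Equivariant

section Shift

variable {C : Type*} [AddAction (ZMod 3) C]

local notation "Q" => AddAction.orbitRel.Quotient (ZMod 3) C

theorem sh_vadd {c c' : C} (h : (⟦c⟧ : Q) = ⟦c'⟧) : sh c c' +ᵥ c = c' := by
  have hex := exists_vadd_eq_of_mk_eq_s7 h
  rw [sh, dif_pos hex]
  exact hex.choose_spec

theorem sh_eq_of_vadd_eq (hfree : ∀ (k : ZMod 3) (c : C), k +ᵥ c = c → k = 0)
    {c c' : C} {k : ZMod 3} (h : k +ᵥ c = c') : sh c c' = k := by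
  have hmk : (⟦c⟧ : Q) = ⟦c'⟧ := h ▸ (AddAction.orbitRel.Quotient.quotient_vadd_eq).symm
  refine sub_eq_zero.mp (hfree _ c ?_)
  rw [sub_eq_add_neg, add_comm, add_vadd, sh_vadd hmk, ← h, neg_vadd_vadd]

theorem sh_self (hfree : ∀ (k : ZMod 3) (c : C), k +ᵥ c = c → k = 0) (c : C) : sh c c = 0 :=
  sh_eq_of_vadd_eq hfree (zero_vadd _ c)

theorem sh_add_sh (hfree : ∀ (k : ZMod 3) (c : C), k +ᵥ c = c → k = 0) {a b c : C}
    (hab : (⟦a⟧ : Q) = ⟦b⟧) (hbc : (⟦b⟧ : Q) = ⟦c⟧) : sh b c + sh a b = sh a c :=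
  (sh_eq_of_vadd_eq hfree (by rw [add_vadd, sh_vadd hab, sh_vadd hbc])).symm

theorem sh_swap (hfree : ∀ (k : ZMod 3) (c : C), k +ᵥ c = c → k = 0) {a b : C}
    (hab : (⟦a⟧ : Q) = ⟦b⟧) : sh b a = -sh a b :=
  sh_eq_of_vadd_eq hfree (neg_vadd_eq_iff.2 (sh_vadd hab).symm)

theorem sh_apply_apply (hfree : ∀ (k : ZMod 3) (c : C), k +ᵥ c = c → k = 0)
    {g : Equiv.Perm C} (hg : g ∈ equivariantPerms (ZMod 3) C) {a b : C}
    (hab : (⟦a⟧ : Q) = ⟦b⟧) : sh (g a) (g b) = sh a b :=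
  sh_eq_of_vadd_eq hfree (by rw [← hg, sh_vadd hab])

/-- `sh(g)` of the paper, computed with the induced permutation `gbar` and the section `φ`. -/
noncomputable def totalShift (g : Equiv.Perm C) (gbar : Equiv.Perm Q) (φ : Q → C) : ZMod 3 :=
  ∑ᶠ q, sh (g (φ q)) (φ (gbar q))

theorem totalShift_eq_zero_of_apply_section
    (hfree : ∀ (k : ZMod 3) (c : C), k +ᵥ c = c → k = 0) {g : Equiv.Perm C}
    {gbar : Equiv.Perm Q} {φ : Q → C} (h : ∀ q, g (φ q) = φ (gbar q)) :
    totalShift g gbar φ = 0 :=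
  finsum_eq_zero_of_forall_eq_zero fun q => by rw [h, sh_self hfree]

variable [Finite C]

theorem totalShift_section_indep (hfree : ∀ (k : ZMod 3) (c : C), k +ᵥ c = c → k = 0)
    {g : Equiv.Perm C} (hg : g ∈ equivariantPerms (ZMod 3) C) {gbar : Equiv.Perm Q}
    (hgbar : Semiconj (Quotient.mk _) g gbar) {φ ψ : Q → C}
    (hφ : LeftInverse (Quotient.mk _) φ) (hψ : LeftInverse (Quotient.mk _) ψ) :
    totalShift g gbar φ = totalShift g gbar ψ := by
  set d : Q → ZMod 3 := fun q => sh (φ q) (ψ q)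
  have hterm : ∀ q, sh (g (φ q)) (φ (gbar q))
      = sh (g (ψ q)) (ψ (gbar q)) + (d q - d (gbar q)) := by
    intro q
    have hφψ : ∀ r, (⟦φ r⟧ : Q) = ⟦ψ r⟧ := fun r => (hφ r).trans (hψ r).symm
    have hgψ : (⟦g (ψ q)⟧ : Q) = ⟦ψ (gbar q)⟧ := by rw [hgbar.eq, hψ, hψ]
    have hgφψ : (⟦g (φ q)⟧ : Q) = ⟦g (ψ q)⟧ := by rw [hgbar.eq, hgbar.eq, hφψ]
    rw [← sh_add_sh hfree hgφψ (hgψ.trans (hφψ _).symm), ← sh_add_sh hfree hgψ (hφψ _).symm,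
      sh_swap hfree (hφψ _), sh_apply_apply hfree hg (hφψ q)]
    abel
  rw [totalShift, finsum_congr hterm, finsum_add_distrib (Set.toFinite _) (Set.toFinite _),
    finsum_sub_distrib (Set.toFinite _) (Set.toFinite _), finsum_comp_equiv gbar (f := d),
    sub_self, add_zero, totalShift]

theorem totalShift_mul (hfree : ∀ (k : ZMod 3) (c : C), k +ᵥ c = c → k = 0)
    {x y : Equiv.Perm C} (hx : x ∈ equivariantPerms (ZMod 3) C) {xbar ybar : Equiv.Perm Q}
    (hxbar : Semiconj (Quotient.mk _) x xbar) (hybar : Semiconj (Quotient.mk _) y ybar)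
    {φ : Q → C} (hφ : LeftInverse (Quotient.mk _) φ) :
    totalShift (x * y) (xbar * ybar) φ = totalShift x xbar φ + totalShift y ybar φ := by
  have hterm : ∀ q, sh ((x * y) (φ q)) (φ ((xbar * ybar) q))
      = sh (x (φ (ybar q))) (φ (xbar (ybar q))) + sh (y (φ q)) (φ (ybar q)) := by
    intro q
    have hyφ : (⟦y (φ q)⟧ : Q) = ⟦φ (ybar q)⟧ := by rw [hybar.eq, hφ, hφ]
    have hxφ : (⟦x (φ (ybar q))⟧ : Q) = ⟦φ (xbar (ybar q))⟧ := by rw [hxbar.eq, hφ, hφ]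
    have hxyφ : (⟦x (y (φ q))⟧ : Q) = ⟦x (φ (ybar q))⟧ := by rw [hxbar.eq, hxbar.eq, hyφ]
    rw [Equiv.Perm.mul_apply, Equiv.Perm.mul_apply, ← sh_add_sh hfree hxyφ hxφ,
      sh_apply_apply hfree hx hyφ]
  rw [totalShift, finsum_congr hterm, finsum_add_distrib (Set.toFinite _) (Set.toFinite _),
    finsum_comp_equiv ybar (f := fun q => sh (x (φ q)) (φ (xbar q))), totalShift, totalShift]

theorem totalShift_inv (hfree : ∀ (k : ZMod 3) (c : C), k +ᵥ c = c → k = 0)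
    {x : Equiv.Perm C} (hx : x ∈ equivariantPerms (ZMod 3) C) {xbar : Equiv.Perm Q}
    (hxbar : Semiconj (Quotient.mk _) x xbar) {φ : Q → C} (hφ : LeftInverse (Quotient.mk _) φ) :
    totalShift x⁻¹ xbar⁻¹ φ = -totalShift x xbar φ := by
  have hxbar' : Semiconj (Quotient.mk _) ⇑x⁻¹ ⇑xbar⁻¹ :=
    hxbar.inverses_right x.apply_symm_apply xbar.symm_apply_apply
  refine eq_neg_of_add_eq_zero_left ?_
  rw [← totalShift_mul hfree (inv_mem hx) hxbar' hxbar hφ, inv_mul_cancel, inv_mul_cancel]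
  exact totalShift_eq_zero_of_apply_section hfree fun _ => rfl

end Shift

/-- Theorem 4.3(v): if every permutation in `S` is equivariant and admits a section
of the quotient map compatible with it, then every element `g` of the subgroup
generated by `S` has total shift `sh g = 0` (computed with any induced permutation
`gbar` of the quotient and any section `φ`). -/
theorem sum_sh_eq_zero_of_mem_closure
    {C : Type*} [Finite C] [AddAction (ZMod 3) C]
    (hfree : ∀ (k : ZMod 3) (c : C), k +ᵥ c = c → k = 0)
    (S : Set (Equiv.Perm C))
    (hS : ∀ f ∈ S,
      (∀ (k : ZMod 3) (c : C), f (k +ᵥ c) = k +ᵥ f c) ∧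
      ∃ fbar : Equiv.Perm (Quotient (AddAction.orbitRel (ZMod 3) C)),
        (∀ c : C,
          Quotient.mk (AddAction.orbitRel (ZMod 3) C) (f c)
            = fbar (Quotient.mk (AddAction.orbitRel (ZMod 3) C) c)) ∧
        ∃ φ₀ : Quotient (AddAction.orbitRel (ZMod 3) C) → C,
          (∀ q, Quotient.mk (AddAction.orbitRel (ZMod 3) C) (φ₀ q) = q) ∧
          ∀ q, f (φ₀ q) = φ₀ (fbar q)) :
    ∀ g ∈ Subgroup.closure S,
      ∀ gbar : Equiv.Perm (Quotient (AddAction.orbitRel (ZMod 3) C)),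
        (∀ c : C,
          Quotient.mk (AddAction.orbitRel (ZMod 3) C) (g c)
            = gbar (Quotient.mk (AddAction.orbitRel (ZMod 3) C) c)) →
        ∀ φ : Quotient (AddAction.orbitRel (ZMod 3) C) → C,
          (∀ q, Quotient.mk (AddAction.orbitRel (ZMod 3) C) (φ q) = q) →
          ∑ᶠ q, sh (g (φ q)) (φ (gbar q)) = 0 := by
  intro g hg gbar hgbar φ hφ
  have hequiv : Subgroup.closure S ≤ equivariantPerms (ZMod 3) C :=
    (Subgroup.closure_le _).2 fun f hf => (hS f hf).1
  change totalShift g gbar φ = 0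
  induction hg using Subgroup.closure_induction generalizing gbar with
  | mem f hf =>
    obtain ⟨hf_equiv, fbar, hfbar, φ₀, hφ₀, hcompat⟩ := hS f hf
    obtain rfl := Equiv.Perm.eq_of_semiconj_mk hgbar hfbar
    rw [totalShift_section_indep hfree hf_equiv hgbar hφ hφ₀]
    exact totalShift_eq_zero_of_apply_section hfree hcompat
  | one =>
    obtain rfl := Equiv.Perm.eq_of_semiconj_mk hgbar (b := 1) fun _ => rfl
    exact totalShift_eq_zero_of_apply_section hfree fun _ => rfl
  | mul x y hx hy ihx ihy =>
    obtain ⟨xbar, hxbar⟩ := exists_semiconj_of_mem_equivariantPerms (hequiv hx)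
    obtain ⟨ybar, hybar⟩ := exists_semiconj_of_mem_equivariantPerms (hequiv hy)
    have hxybar : Semiconj (Quotient.mk _) ⇑(x * y) ⇑(xbar * ybar) := hxbar.comp_right hybar
    obtain rfl := Equiv.Perm.eq_of_semiconj_mk hgbar hxybar
    rw [totalShift_mul hfree (hequiv hx) hxbar hybar hφ, ihx xbar hxbar, ihy ybar hybar, add_zero]
  | inv x hx ihx =>
    have hxbar : Semiconj (Quotient.mk _) ⇑x ⇑gbar⁻¹ :=
      Semiconj.inverses_right hgbar x.symm_apply_apply gbar.symm_apply_apply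
    rw [← inv_inv gbar, totalShift_inv hfree (hequiv hx) hxbar hφ, ihx _ hxbar, neg_zero]
end
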